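/- For σ > 0 and θ with |θ| > σ, setting ρ_θ := θ + σ^2/θ, the Stieltjes transform of the semicircle law satisfies g_σ(ρ_θ) = 1/θ. -/

import Mathlib

/-!
Since `g_σ` is odd, it suffices to take `θ > σ`, so that `ρ_θ > 2σ`. For `ρ > r > 0` the function
`ρ arcsin (x/r) - √(r² - x²) + √(ρ² - r²) arcsin ((r² - ρx)/(r(ρ - x)))` is an antiderivative of
`√(r² - x²)/(ρ - x)` on `(-r, r)`, and the Möbius map inside the second arcsin swaps `±r` with `∓1`,
so `∫_{-r}^{r} √(r² - x²)/(ρ - x) dx = π(ρ - √(ρ² - r²))`. At `r = 2σ`, `ρ = θ + σ²/θ` the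
square root is `θ - σ²/θ`, and `g_σ(ρ_θ) = (2σ²/θ)/(2σ²) = 1/θ`.
-/

open Real Set intervalIntegral

lemma HasDerivAt.arcsin {f : ℝ → ℝ} {f' x : ℝ} (hf : HasDerivAt f f' x) (h₁ : f x ≠ -1)
    (h₂ : f x ≠ 1) : HasDerivAt (fun y => arcsin (f y)) (f' / √(1 - f x ^ 2)) x :=
  ((hasDerivAt_arcsin h₁ h₂).comp x hf).congr_deriv (by ring)

section Antiderivative

variable {r ρ x : ℝ}

lemma hasDerivAt_arcsin_div (hr : 0 < r) (hx : x ∈ Ioo (-r) r) :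
    HasDerivAt (fun y => arcsin (y / r)) (1 / √(r ^ 2 - x ^ 2)) x := by
  obtain ⟨hxl, hxr⟩ := hx
  have hrx : 0 < r ^ 2 - x ^ 2 := by nlinarith
  have hsqrt : √(1 - (x / r) ^ 2) = √(r ^ 2 - x ^ 2) / r := by
    rw [show 1 - (x / r) ^ 2 = (r ^ 2 - x ^ 2) / r ^ 2 by field_simp,
      sqrt_div hrx.le, sqrt_sq hr.le]
  have hl : -1 < x / r := by rw [lt_div_iff₀ hr]; linarith
  have hu : x / r < 1 := by rw [div_lt_one hr]; linarith
  refine (((hasDerivAt_id' x).div_const r).arcsin hl.ne' hu.ne).congr_deriv ?_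
  rw [hsqrt]
  field_simp

lemma hasDerivAt_sqrt_sq_sub_sq (hx : x ∈ Ioo (-r) r) :
    HasDerivAt (fun y => √(r ^ 2 - y ^ 2)) (-x / √(r ^ 2 - x ^ 2)) x := by
  have hrx : r ^ 2 - x ^ 2 ≠ 0 := by nlinarith [hx.1, hx.2]
  refine (((hasDerivAt_pow 2 x).const_sub (r ^ 2)).sqrt hrx).congr_deriv ?_
  field_simp
  ring

lemma hasDerivAt_arcsin_moebius (hr : 0 < r) (hρ : r < ρ) (hx : x ∈ Ioo (-r) r) :
    HasDerivAt (fun y => arcsin ((r ^ 2 - ρ * y) / (r * (ρ - y))))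
      (-√(ρ ^ 2 - r ^ 2) / ((ρ - x) * √(r ^ 2 - x ^ 2))) x := by
  obtain ⟨hxl, hxr⟩ := hx
  have hρx : 0 < ρ - x := by linarith
  have hq : 0 < √(r ^ 2 - x ^ 2) := sqrt_pos.2 (by nlinarith)
  have hs : 0 < √(ρ ^ 2 - r ^ 2) := sqrt_pos.2 (by nlinarith)
  have hq2 := sq_sqrt (show 0 ≤ r ^ 2 - x ^ 2 by nlinarith)
  have hs2 := sq_sqrt (show 0 ≤ ρ ^ 2 - r ^ 2 by nlinarith)
  set u := (r ^ 2 - ρ * x) / (r * (ρ - x))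
  have hcos : 1 - u ^ 2 = (√(r ^ 2 - x ^ 2) * √(ρ ^ 2 - r ^ 2) / (r * (ρ - x))) ^ 2 := by
    simp only [u]
    field_simp
    rw [hq2, hs2]
    ring
  have hu : |u| < 1 := by
    rw [← sq_lt_one_iff_abs_lt_one, ← sub_pos, hcos]
    positivity
  have hnum : HasDerivAt (fun y => r ^ 2 - ρ * y) (-ρ) x := by
    simpa using ((hasDerivAt_id x).const_mul ρ).const_sub (r ^ 2)
  have hden : HasDerivAt (fun y => r * (ρ - y)) (-r) x := by
    simpa using ((hasDerivAt_id x).const_sub ρ).const_mul r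
  obtain ⟨hu_gt, hu_lt⟩ := abs_lt.1 hu
  refine ((hnum.div hden (by positivity)).arcsin hu_gt.ne' hu_lt.ne).congr_deriv ?_
  change _ / √(1 - u ^ 2) = _
  rw [hcos, sqrt_sq (by positivity)]
  field_simp
  rw [hs2]
  ring

noncomputable def semicircleAntideriv (r ρ x : ℝ) : ℝ :=
  ρ * arcsin (x / r) - √(r ^ 2 - x ^ 2) +
    √(ρ ^ 2 - r ^ 2) * arcsin ((r ^ 2 - ρ * x) / (r * (ρ - x)))

lemma hasDerivAt_semicircleAntideriv (hr : 0 < r) (hρ : r < ρ) (hx : x ∈ Ioo (-r) r) :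
    HasDerivAt (semicircleAntideriv r ρ) (√(r ^ 2 - x ^ 2) / (ρ - x)) x := by
  have hρx : 0 < ρ - x := by linarith [hx.2]
  have hq : 0 < √(r ^ 2 - x ^ 2) := sqrt_pos.2 (by nlinarith [hx.1, hx.2])
  have hq2 := sq_sqrt (show 0 ≤ r ^ 2 - x ^ 2 by nlinarith [hx.1, hx.2])
  have hs2 := sq_sqrt (show 0 ≤ ρ ^ 2 - r ^ 2 by nlinarith)
  refine ((((hasDerivAt_arcsin_div hr hx).const_mul ρ).sub (hasDerivAt_sqrt_sq_sub_sq hx)).add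
    ((hasDerivAt_arcsin_moebius hr hρ hx).const_mul _)).congr_deriv ?_
  field_simp
  linear_combination -hq2 - hs2

end Antiderivative

theorem integral_sqrt_sq_sub_sq_div_sub {r ρ : ℝ} (hr : 0 < r) (hρ : r < ρ) :
    ∫ x in (-r)..r, √(r ^ 2 - x ^ 2) / (ρ - x) = π * (ρ - √(ρ ^ 2 - r ^ 2)) := by
  have hsub : ∀ x ∈ Icc (-r) r, ρ - x ≠ 0 := fun x hx => by linarith [hx.2]
  have hmoeb : ∀ x ∈ Icc (-r) r, r * (ρ - x) ≠ 0 := fun x hx => mul_ne_zero hr.ne' (hsub x hx)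
  have hF : ContinuousOn (semicircleAntideriv r ρ) (Icc (-r) r) := by
    unfold semicircleAntideriv
    fun_prop (disch := assumption)
  have hf : ContinuousOn (fun x => √(r ^ 2 - x ^ 2) / (ρ - x)) (uIcc (-r) r) := by
    rw [uIcc_of_le (by linarith)]
    fun_prop (disch := assumption)
  rw [integral_eq_sub_of_hasDerivAt_of_le (by linarith) hF
    (fun x hx => hasDerivAt_semicircleAntideriv hr hρ hx) hf.intervalIntegrable]
  have hu_right : (r ^ 2 - ρ * r) / (r * (ρ - r)) = -1 := by
    field_simp [(sub_pos.2 hρ).ne']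
    ring
  have hu_left : (r ^ 2 - ρ * -r) / (r * (ρ - -r)) = 1 := by
    rw [div_eq_one_iff_eq (mul_pos hr (by linarith)).ne']
    ring
  simp only [semicircleAntideriv, hu_right, hu_left, div_self hr.ne', neg_div_self hr.ne',
    sub_self, neg_sq, sqrt_zero, arcsin_one, arcsin_neg_one]
  ring

noncomputable def semicircleDensity (σ x : ℝ) : ℝ :=
  (1 / (2 * π * σ ^ 2)) * √(4 * σ ^ 2 - x ^ 2)

noncomputable def semicircleStieltjes (σ z : ℝ) : ℝ :=
  ∫ x in (-(2 * σ))..(2 * σ), semicircleDensity σ x / (z - x)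

lemma semicircleDensity_neg (σ x : ℝ) : semicircleDensity σ (-x) = semicircleDensity σ x := by
  rw [semicircleDensity, neg_sq, semicircleDensity]

lemma semicircleStieltjes_neg (σ z : ℝ) :
    semicircleStieltjes σ (-z) = -semicircleStieltjes σ z := by
  unfold semicircleStieltjes
  calc _ = ∫ x in (-(2 * σ))..(2 * σ), -(semicircleDensity σ (-x) / (z - -x)) := by
        congr 1 with x
        rw [semicircleDensity_neg, show -z - x = -(z - -x) by ring, div_neg]
    _ = _ := by
        rw [integral_neg, integral_comp_neg fun x => semicircleDensity σ x / (z - x), neg_neg]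

lemma semicircleStieltjes_of_lt {σ z : ℝ} (hσ : 0 < σ) (hz : 2 * σ < z) :
    semicircleStieltjes σ z = (z - √(z ^ 2 - 4 * σ ^ 2)) / (2 * σ ^ 2) := by
  have h := integral_sqrt_sq_sub_sq_div_sub (by positivity) hz
  simp only [mul_pow, show (2 : ℝ) ^ 2 = 4 by norm_num] at h
  simp only [semicircleStieltjes, semicircleDensity, mul_div_assoc, integral_const_mul, h]
  field_simp

lemma semicircleStieltjes_add_sq_div {σ θ : ℝ} (hσ : 0 < σ) (hθ : σ < θ) :
    semicircleStieltjes σ (θ + σ ^ 2 / θ) = 1 / θ := by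
  have hθ0 : 0 < θ := hσ.trans hθ
  have hz : 2 * σ < θ + σ ^ 2 / θ := by
    have hgap : θ + σ ^ 2 / θ - 2 * σ = (θ - σ) ^ 2 / θ := by field_simp; ring
    have : 0 < (θ - σ) ^ 2 / θ := by have := sub_pos.2 hθ; positivity
    linarith
  have hsqrt : √((θ + σ ^ 2 / θ) ^ 2 - 4 * σ ^ 2) = θ - σ ^ 2 / θ := by
    rw [show (θ + σ ^ 2 / θ) ^ 2 - 4 * σ ^ 2 = (θ - σ ^ 2 / θ) ^ 2 by field_simp; ring]
    refine sqrt_sq (sub_nonneg.2 ((div_le_iff₀ hθ0).2 ?_))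
    nlinarith
  rw [semicircleStieltjes_of_lt hσ hz, hsqrt]
  field_simp
  ring

/-- For `σ > 0` and `|θ| > σ`, with `ρ_θ = θ + σ^2/θ`, the Stieltjes transform of the
semicircle law (with density `(1/(2πσ^2))·sqrt(4σ^2-x^2)` on `[-2σ,2σ]`) satisfies
`g_σ(ρ_θ) = 1/θ`. -/
theorem stmt_1 (σ θ : ℝ) (hσ : 0 < σ) (hθ : σ < |θ|) :
    (∫ x in (-(2*σ))..(2*σ),
      (1/(2*Real.pi*σ^2)) * Real.sqrt (4*σ^2 - x^2) / ((θ + σ^2/θ) - x)) = 1/θ := by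
  change semicircleStieltjes σ (θ + σ ^ 2 / θ) = 1 / θ
  rcases le_or_gt 0 θ with hθ0 | hθ0
  · exact semicircleStieltjes_add_sq_div hσ (by rwa [abs_of_nonneg hθ0] at hθ)
  · have h := semicircleStieltjes_add_sq_div hσ (by rwa [abs_of_neg hθ0] at hθ)
    rw [show -θ + σ ^ 2 / -θ = -(θ + σ ^ 2 / θ) by ring, semicircleStieltjes_neg] at h
    rw [← neg_neg (semicircleStieltjes _ _), h, div_neg, neg_neg]
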